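/- arXiv:1712.09477 — 2 statements merged into one kernel-verified Lean document; each statement's English description precedes it below -/
import Mathlib

section
/- Let G = DS(L, P^core, R) be a double spider that contains a path P of length one among its legs, with P ∈ R. If deg_G(v_l) ≥ deg_G(v_r) > 3 and the double spider DS(L, P^core, R \ {P}) obtained from G by deleting the leg P is strongly antimagic, then G is strongly antimagic. -/
open Classical

noncomputable section

/-- The vertex sum at `u` of an edge labeling `f`: the sum of the labels of the
edges incident to `u`. -/
def vertexSum {V : Type*} [Fintype V] (G : SimpleGraph V) (f : Sym2 V → ℕ) (u : V) : ℕ :=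
  ∑ e ∈ G.incidenceFinset u, f e

/-- `f` is an antimagic labeling of `G`: it is a bijection from the edge set of `G`
onto `{1, …, |E|}` and the vertex sums are pairwise distinct. -/
def IsAntimagicLabeling {V : Type*} [Fintype V] (G : SimpleGraph V)
    (f : Sym2 V → ℕ) : Prop :=
  Set.BijOn f G.edgeSet (Set.Icc 1 G.edgeFinset.card) ∧
  Function.Injective (vertexSum G f)

/-- `f` is a strongly antimagic labeling of `G`: it is an antimagic labeling and moreover
`deg u < deg v` implies `vertexSum u < vertexSum v`. -/
def IsStronglyAntimagicLabeling {V : Type*} [Fintype V] (G : SimpleGraph V)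
    (f : Sym2 V → ℕ) : Prop :=
  Set.BijOn f G.edgeSet (Set.Icc 1 G.edgeFinset.card) ∧
  Function.Injective (vertexSum G f) ∧
  ∀ u v : V, G.degree u < G.degree v → vertexSum G f u < vertexSum G f v

/-- `G` is antimagic if it admits an antimagic labeling. -/
def IsAntimagic {V : Type*} [Fintype V] (G : SimpleGraph V) : Prop :=
  ∃ f : Sym2 V → ℕ, IsAntimagicLabeling G f

/-- `G` is strongly antimagic if it admits a strongly antimagic labeling. -/
def IsStronglyAntimagic {V : Type*} [Fintype V] (G : SimpleGraph V) : Prop :=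
  ∃ f : Sym2 V → ℕ, IsStronglyAntimagicLabeling G f

/-- The vertex type of a double spider: the core path has vertices `0, …, s`,
and each leg of length `ℓ` (an entry of `L` or of `R`) contributes `ℓ` further
vertices, at distances `1, …, ℓ` from the branch vertex it is attached to. -/
abbrev DSVert (s : ℕ) (L R : List ℕ) : Type :=
  Fin (s + 1) ⊕ (((i : Fin L.length) × Fin (L.get i)) ⊕ ((i : Fin R.length) × Fin (R.get i)))

/-- The double spider `DS(L, Pᶜᵒʳᵉ, R)`: the core path `v_l = 0 — 1 — ⋯ — s = v_r`,
together with, for each entry `ℓ` of `L` (resp. of `R`), a leg which is a path of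
length `ℓ` attached at `v_l` (resp. at `v_r`). -/
def DoubleSpider (s : ℕ) (L R : List ℕ) : SimpleGraph (DSVert s L R) :=
  SimpleGraph.fromRel fun x y =>
    match x, y with
    | Sum.inl a, Sum.inl b => (b : ℕ) = (a : ℕ) + 1
    | Sum.inl a, Sum.inr (Sum.inl p) => (a : ℕ) = 0 ∧ (p.2 : ℕ) = 0
    | Sum.inl a, Sum.inr (Sum.inr p) => (a : ℕ) = s ∧ (p.2 : ℕ) = 0
    | Sum.inr (Sum.inl p), Sum.inr (Sum.inl q) => p.1 = q.1 ∧ (q.2 : ℕ) = (p.2 : ℕ) + 1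
    | Sum.inr (Sum.inr p), Sum.inr (Sum.inr q) => p.1 = q.1 ∧ (q.2 : ℕ) = (p.2 : ℕ) + 1
    | _, _ => False

/-- The branch vertex `v_l` of a double spider. -/
def vL (s : ℕ) (L R : List ℕ) : DSVert s L R := Sum.inl 0

/-- The branch vertex `v_r` of a double spider. -/
def vR (s : ℕ) (L R : List ℕ) : DSVert s L R := Sum.inl (Fin.last s)

/-!
Let `w` be the leaf of the pendant leg `P` at `v_r`, so that `G - w` is the smaller double spider.
Given a strongly antimagic labeling `f` of `G - w`, label the pendant edge `vᵣw` by `1` and every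
other edge `e` by `f e + 1`. Then every vertex `v ≠ w` has vertex sum `φ_f(v) + deg_G(v)`, while
`w` has vertex sum `1`, smaller than all others. Passing from `G - w` to `G` changes only the
degree of `v_r`, which goes up by one, so the degree order can only break if some other vertex
has degree exactly `deg(v_r) - 1 ≥ 3`. That is impossible: `deg(v_l) ≥ deg(v_r)` and all other
vertices have degree at most `2`.
-/

open Finset SimpleGraph

/-- The edges in the image of `ι` keep their label shifted up by one; all other edges get `1`. -/
def pendantLabeling {V V' : Type*} (ι : V' → V) (f : Sym2 V' → ℕ) : Sym2 V → ℕ :=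
  Function.extend (Sym2.map ι) f 0 + 1

section VertexSum

variable {V V' : Type*} [Fintype V] {G : SimpleGraph V} {G' : SimpleGraph V'}

theorem vertexSum_add_one (f : Sym2 V → ℕ) (u : V) :
    vertexSum G (f + 1) u = vertexSum G f u + G.degree u := by
  simp [vertexSum, sum_add_distrib, card_incidenceFinset_eq_degree]

theorem degree_le_vertexSum {f : Sym2 V → ℕ} (hf : ∀ e ∈ G.edgeSet, 1 ≤ f e) (u : V) :
    G.degree u ≤ vertexSum G f u := by
  simpa [vertexSum, card_incidenceFinset_eq_degree] using
    Finset.card_nsmul_le_sum _ f 1 fun e he => hf e ((mem_incidenceFinset _ _ _).mp he).1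

theorem vertexSum_extend_map_of_notMem_range (ι : G' ↪g G) (f : Sym2 V' → ℕ) {w : V}
    (hw : w ∉ Set.range ι) : vertexSum G (Function.extend (Sym2.map ι) f 0) w = 0 := by
  refine Finset.sum_eq_zero fun e he => Function.extend_apply' _ _ _ ?_
  rintro ⟨e', rfl⟩
  obtain ⟨a, -, rfl⟩ := Sym2.mem_map.mp ((mem_incidenceFinset _ _ _).mp he).2
  exact hw ⟨a, rfl⟩

theorem vertexSum_pendantLabeling_of_notMem_range (ι : G' ↪g G) (f : Sym2 V' → ℕ) {w : V}
    (hw : w ∉ Set.range ι) : vertexSum G (pendantLabeling ι f) w = G.degree w := by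
  rw [pendantLabeling, vertexSum_add_one, vertexSum_extend_map_of_notMem_range ι f hw, zero_add]

variable [Fintype V']

theorem vertexSum_extend_map (ι : G' ↪g G) (f : Sym2 V' → ℕ) (a : V') :
    vertexSum G (Function.extend (Sym2.map ι) f 0) (ι a) = vertexSum G' f a := by
  have hinj : Function.Injective (Sym2.map ι) := Sym2.map.injective ι.injective
  have hmem : ∀ e : Sym2 V', ι a ∈ e.map ι ↔ a ∈ e := fun e => by
    simp only [Sym2.mem_map, ι.injective.eq_iff, exists_eq_right]
  calc vertexSum G (Function.extend (Sym2.map ι) f 0) (ι a)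
      = ∑ e ∈ (G'.incidenceFinset a).image (Sym2.map ι),
          Function.extend (Sym2.map ι) f 0 e := by
        refine (Finset.sum_subset (fun e he => ?_) fun e he hne => ?_).symm
        · obtain ⟨e', he', rfl⟩ := Finset.mem_image.mp he
          rw [mem_incidenceFinset] at he' ⊢
          exact ⟨ι.map_mem_edgeSet_iff.mpr he'.1, (hmem e').mpr he'.2⟩
        · refine Function.extend_apply' _ _ _ ?_
          rintro ⟨e', rfl⟩
          rw [mem_incidenceFinset] at he
          exact hne (Finset.mem_image_of_mem _ ((mem_incidenceFinset _ _ _).mpr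
            ⟨ι.map_mem_edgeSet_iff.mp he.1, (hmem e').mp he.2⟩))
    _ = vertexSum G' f a := by
        rw [Finset.sum_image hinj.injOn]
        exact Finset.sum_congr rfl fun e _ => hinj.extend_apply f 0 e

theorem vertexSum_pendantLabeling_map (ι : G' ↪g G) (f : Sym2 V' → ℕ) (a : V') :
    vertexSum G (pendantLabeling ι f) (ι a) = vertexSum G' f a + G.degree (ι a) := by
  rw [pendantLabeling, vertexSum_add_one, vertexSum_extend_map]

theorem two_le_vertexSum_pendantLabeling (ι : G' ↪g G) {f : Sym2 V' → ℕ} {n : ℕ}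
    (hf : Set.MapsTo f G'.edgeSet (Set.Icc 1 n)) (hpos : ∀ a, 0 < G'.degree a) (a : V') :
    2 ≤ vertexSum G (pendantLabeling ι f) (ι a) := by
  have := degree_le_vertexSum (fun e he => (hf he).1) a
  have : G'.degree a ≤ G.degree (ι a) := ι.toCopy.degree_le a
  have := hpos a
  rw [vertexSum_pendantLabeling_map]
  omega

end VertexSum

/-- `G` arises from `G'` by attaching a pendant vertex `w` to `r`; `ι` identifies `G'` with
`G - w`. -/
structure IsPendantExtension {V V' : Type*} {G : SimpleGraph V} {G' : SimpleGraph V'}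
    (ι : G' ↪g G) (w r : V) : Prop where
  adj_iff : ∀ v, G.Adj w v ↔ v = r
  range_eq : Set.range ι = {w}ᶜ

namespace IsPendantExtension

variable {V V' : Type*} {G : SimpleGraph V} {G' : SimpleGraph V'} {ι : G' ↪g G} {w r : V}

theorem map_ne (h : IsPendantExtension ι w r) (a : V') : ι a ≠ w :=
  (Set.ext_iff.mp h.range_eq _).mp ⟨a, rfl⟩

theorem exists_map_eq (h : IsPendantExtension ι w r) {v : V} (hv : v ≠ w) : ∃ a, ι a = v :=
  (Set.ext_iff.mp h.range_eq v).mpr hv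

theorem notMem_sym2Map (h : IsPendantExtension ι w r) {e : Sym2 V'} : w ∉ e.map ι := by
  rw [Sym2.mem_map]
  rintro ⟨a, -, ha⟩
  exact h.map_ne a ha

theorem edgeSet_eq (h : IsPendantExtension ι w r) :
    G.edgeSet = insert s(w, r) (Sym2.map ι '' G'.edgeSet) := by
  have hmap : ∀ {e : Sym2 V'}, Sym2.map ι e ≠ s(w, r) := fun he =>
    h.notMem_sym2Map (he ▸ Sym2.mem_mk_left w r)
  have hw : ∀ y,
      s(w, y) ∈ G.edgeSet ↔ s(w, y) ∈ insert s(w, r) (Sym2.map ι '' G'.edgeSet) := by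
    intro y
    rw [mem_edgeSet, h.adj_iff, Set.mem_insert_iff, Sym2.congr_right, iff_self_or]
    rintro ⟨e, -, he⟩
    exact (h.notMem_sym2Map (he ▸ Sym2.mem_mk_left w y)).elim
  ext e
  induction e using Sym2.ind with
  | _ x y =>
    rcases eq_or_ne x w with rfl | hx
    · exact hw y
    rcases eq_or_ne y w with rfl | hy
    · rw [Sym2.eq_swap]; exact hw x
    obtain ⟨a, rfl⟩ := h.exists_map_eq hx
    obtain ⟨b, rfl⟩ := h.exists_map_eq hy
    rw [← Sym2.map_mk, ι.map_mem_edgeSet_iff, Set.mem_insert_iff,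
      (Sym2.map.injective ι.injective).mem_set_image, or_iff_right hmap]

variable [Fintype V]

theorem degree_eq_one (h : IsPendantExtension ι w r) : G.degree w = 1 := by
  rw [← card_neighborFinset_eq_degree, Finset.card_eq_one]
  exact ⟨r, Finset.ext fun v => by simp [h.adj_iff]⟩

theorem vertexSum_pendantLabeling_pendant (h : IsPendantExtension ι w r) (f : Sym2 V' → ℕ) :
    vertexSum G (pendantLabeling ι f) w = 1 := by
  rw [vertexSum_pendantLabeling_of_notMem_range ι f (by simp [h.range_eq]), h.degree_eq_one]

variable [Fintype V']

theorem card_edgeFinset (h : IsPendantExtension ι w r) :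
    #G.edgeFinset = #G'.edgeFinset + 1 := by
  rw [← Set.ncard_coe_finset, coe_edgeFinset, h.edgeSet_eq, Set.ncard_insert_of_notMem,
    Set.ncard_image_of_injective _ (Sym2.map.injective ι.injective), ← coe_edgeFinset,
    Set.ncard_coe_finset]
  rintro ⟨e, -, he⟩
  exact h.notMem_sym2Map (he ▸ Sym2.mem_mk_left w r)

theorem neighborFinset_erase (h : IsPendantExtension ι w r) (a : V') :
    (G.neighborFinset (ι a)).erase w = (G'.neighborFinset a).map ι.toEmbedding := by
  ext v
  simp only [Finset.mem_erase, mem_neighborFinset, Finset.mem_map]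
  constructor
  · rintro ⟨hv, hadj⟩
    obtain ⟨b, rfl⟩ := h.exists_map_eq hv
    exact ⟨b, ι.map_adj_iff.mp hadj, rfl⟩
  · rintro ⟨b, hab, rfl⟩
    exact ⟨h.map_ne b, ι.map_adj_iff.mpr hab⟩

theorem degree_map_of_ne (h : IsPendantExtension ι w r) {a : V'} (ha : ι a ≠ r) :
    G.degree (ι a) = G'.degree a := by
  have hw : w ∉ G.neighborFinset (ι a) := by
    rw [mem_neighborFinset, G.adj_comm, h.adj_iff]
    exact ha
  rw [← card_neighborFinset_eq_degree, ← card_neighborFinset_eq_degree,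
    ← Finset.erase_eq_of_notMem hw, h.neighborFinset_erase, Finset.card_map]

theorem degree_map_of_eq (h : IsPendantExtension ι w r) {a : V'} (ha : ι a = r) :
    G.degree (ι a) = G'.degree a + 1 := by
  have hw : w ∈ G.neighborFinset (ι a) := by
    rw [mem_neighborFinset, G.adj_comm, h.adj_iff]
    exact ha
  rw [← card_neighborFinset_eq_degree, ← card_neighborFinset_eq_degree,
    ← Finset.card_erase_add_one hw, h.neighborFinset_erase, Finset.card_map]

theorem degree_lt_degree_of_map (h : IsPendantExtension ι w r)
    (hgap : ∀ a, ι a ≠ r → G.degree (ι a) + 1 ≠ G.degree r) {a b : V'}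
    (hab : G.degree (ι a) < G.degree (ι b)) : G'.degree a < G'.degree b := by
  by_cases ha : ι a = r <;> by_cases hb : ι b = r
  · rw [ha, hb] at hab; exact absurd hab (lt_irrefl _)
  · rw [h.degree_map_of_eq ha, h.degree_map_of_ne hb] at hab; omega
  · have hgap' := hgap a ha
    rw [← hb] at hgap'
    rw [h.degree_map_of_eq hb, h.degree_map_of_ne ha] at hgap' hab
    omega
  · rwa [h.degree_map_of_ne ha, h.degree_map_of_ne hb] at hab

theorem bijOn_pendantLabeling (h : IsPendantExtension ι w r) {f : Sym2 V' → ℕ}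
    (hf : Set.BijOn f G'.edgeSet (Set.Icc 1 #G'.edgeFinset)) :
    Set.BijOn (pendantLabeling ι f) G.edgeSet (Set.Icc 1 #G.edgeFinset) := by
  have hinj : Function.Injective (Sym2.map ι) := Sym2.map.injective ι.injective
  have hshift : Set.BijOn (· + 1) (Set.Icc 1 #G'.edgeFinset) (Set.Icc 2 (#G'.edgeFinset + 1)) := by
    simpa only [Set.image_add_const_Icc] using
      ((add_left_injective 1).injOn (s := Set.Icc 1 #G'.edgeFinset)).bijOn_image
  have hcomp : pendantLabeling ι f ∘ Sym2.map ι = (· + 1) ∘ f := funext fun e => by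
    simp [pendantLabeling, hinj.extend_apply]
  have hnew : pendantLabeling ι f s(w, r) = 1 := by
    rw [pendantLabeling, Pi.add_apply, Function.extend_apply', Pi.zero_apply, Pi.one_apply,
      zero_add]
    rintro ⟨e, he⟩
    exact h.notMem_sym2Map (he ▸ Sym2.mem_mk_left w r)
  have hIcc : Set.Icc 1 (#G'.edgeFinset + 1) =
      insert (pendantLabeling ι f s(w, r)) (Set.Icc 2 (#G'.edgeFinset + 1)) := by
    rw [hnew]; exact (Set.insert_Icc_succ_left_eq_Icc (by omega)).symm
  rw [h.edgeSet_eq, h.card_edgeFinset, hIcc]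
  refine Set.BijOn.insert ?_ (by simp [hnew])
  rw [← Set.bijOn_comp_iff hinj.injOn, hcomp]
  exact hshift.comp hf

theorem vertexSum_pendantLabeling_lt (h : IsPendantExtension ι w r) {f : Sym2 V' → ℕ}
    (hf : IsStronglyAntimagicLabeling G' f) (hpos : ∀ a, 0 < G'.degree a)
    (hgap : ∀ a, ι a ≠ r → G.degree (ι a) + 1 ≠ G.degree r) {u v : V}
    (huv : G.degree u < G.degree v) :
    vertexSum G (pendantLabeling ι f) u < vertexSum G (pendantLabeling ι f) v := by
  have hw := h.degree_eq_one
  rcases eq_or_ne u w with rfl | hu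
  · obtain ⟨b, rfl⟩ := h.exists_map_eq (v := v) (by rintro rfl; exact huv.ne rfl)
    have := two_le_vertexSum_pendantLabeling ι hf.1.mapsTo hpos b
    rw [h.vertexSum_pendantLabeling_pendant]
    omega
  obtain ⟨a, rfl⟩ := h.exists_map_eq hu
  rcases eq_or_ne v w with rfl | hv
  · have : G'.degree a ≤ G.degree (ι a) := ι.toCopy.degree_le a
    have := hpos a
    omega
  obtain ⟨b, rfl⟩ := h.exists_map_eq hv
  have := hf.2.2 a b (h.degree_lt_degree_of_map hgap huv)
  rw [vertexSum_pendantLabeling_map, vertexSum_pendantLabeling_map]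
  omega

theorem isStronglyAntimagicLabeling_pendantLabeling (h : IsPendantExtension ι w r)
    {f : Sym2 V' → ℕ} (hf : IsStronglyAntimagicLabeling G' f) (hpos : ∀ a, 0 < G'.degree a)
    (hgap : ∀ a, ι a ≠ r → G.degree (ι a) + 1 ≠ G.degree r) :
    IsStronglyAntimagicLabeling G (pendantLabeling ι f) := by
  have hlt := fun u v => h.vertexSum_pendantLabeling_lt hf hpos hgap (u := u) (v := v)
  have hw : ∀ v, vertexSum G (pendantLabeling ι f) v = 1 → v = w := fun v hv => by
    by_contra hvw
    obtain ⟨a, rfl⟩ := h.exists_map_eq hvw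
    have := two_le_vertexSum_pendantLabeling ι hf.1.mapsTo hpos a
    omega
  refine ⟨h.bijOn_pendantLabeling hf.1, fun u v huv => ?_, hlt⟩
  by_cases hu : vertexSum G (pendantLabeling ι f) u = 1
  · exact (hw u hu).trans (hw v (huv ▸ hu)).symm
  have hdeg : G.degree u = G.degree v := by
    by_contra hne
    rcases Nat.lt_or_gt_of_ne hne with huv' | huv'
    · exact (hlt u v huv').ne huv
    · exact (hlt v u huv').ne huv.symm
  obtain ⟨a, rfl⟩ := h.exists_map_eq (v := u)
    (by rintro rfl; exact hu (h.vertexSum_pendantLabeling_pendant f))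
  obtain ⟨b, rfl⟩ := h.exists_map_eq (v := v)
    (by rintro rfl; exact hu (huv.trans (h.vertexSum_pendantLabeling_pendant f)))
  rw [vertexSum_pendantLabeling_map, vertexSum_pendantLabeling_map, hdeg] at huv
  exact congrArg ι (hf.2.1 (by omega))

end IsPendantExtension

theorem degree_le_two_of_forall_adj {V : Type*} [Fintype V] {G : SimpleGraph V} {u : V} (x y : V)
    (h : ∀ v, G.Adj u v → v = x ∨ v = y) : G.degree u ≤ 2 := by
  rw [← card_neighborFinset_eq_degree]
  refine (card_le_card (t := {x, y}) fun v hv => ?_).trans card_le_two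
  simpa using h v ((mem_neighborFinset _ _ _).mp hv)

theorem List.exists_embedding_eraseIdx {α : Type*} (l : List α) (k : Fin l.length) :
    ∃ em : Fin (l.eraseIdx k).length ↪ Fin l.length,
      Set.range em = {k}ᶜ ∧ ∀ i, (l.eraseIdx k).get i = l.get (em i) := by
  have hlen : (l.eraseIdx k).length + 1 = l.length := List.length_eraseIdx_add_one k.isLt
  let p : Fin ((l.eraseIdx k).length + 1) := Fin.cast hlen.symm k
  refine ⟨p.succAboveEmb.trans (finCongr hlen).toEmbedding, ?_, fun i => ?_⟩
  · rw [Function.Embedding.coe_trans, Set.range_comp, Fin.coe_succAboveEmb, Fin.range_succAbove,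
      Equiv.coe_toEmbedding, Set.image_compl_eq (finCongr hlen).bijective, Set.image_singleton]
    rfl
  · simp only [List.get_eq_getElem, List.getElem_eraseIdx, Function.Embedding.trans_apply,
      Fin.coe_succAboveEmb, Equiv.coe_toEmbedding, finCongr_apply, Fin.val_cast, Fin.succAbove, p,
      Fin.lt_def, Fin.val_castSucc]
    split_ifs <;> rfl

theorem List.exists_embedding_erase {α : Type*} [BEq α] [LawfulBEq α] {l : List α} {a : α}
    (ha : a ∈ l) : ∃ (k : Fin l.length) (em : Fin (l.erase a).length ↪ Fin l.length),
      l.get k = a ∧ Set.range em = {k}ᶜ ∧ ∀ i, (l.erase a).get i = l.get (em i) := by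
  have hk : l.idxOf a < l.length := List.idxOf_lt_length_iff.mpr ha
  rw [List.erase_eq_eraseIdx_of_idxOf rfl]
  obtain ⟨em, hrange, hget⟩ := List.exists_embedding_eraseIdx l ⟨_, hk⟩
  exact ⟨⟨_, hk⟩, em, List.getElem_idxOf hk, hrange, hget⟩

namespace DoubleSpider

variable {s : ℕ} {L R R' : List ℕ}

def legEmbedding (em : Fin R'.length ↪ Fin R.length) (hget : ∀ i, R'.get i = R.get (em i)) :
    DoubleSpider s L R' ↪g DoubleSpider s L R where
  toEmbedding := .sumMap (.refl _) (.sumMap (.refl _) (em.sigmaMap fun i => finCongr (hget i)))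
  map_rel_iff' {a b} := by
    rw [DoubleSpider, DoubleSpider, SimpleGraph.fromRel_adj, SimpleGraph.fromRel_adj,
      Function.Embedding.injective _ |>.ne_iff]
    refine and_congr_right fun _ => ?_
    rcases a with a | (⟨i, j⟩ | ⟨i, j⟩) <;>
      rcases b with b | (⟨i', j'⟩ | ⟨i', j'⟩) <;>
      simp [Sigma.map, em.injective.eq_iff]

theorem isPendantExtension_legEmbedding {em : Fin R'.length ↪ Fin R.length}
    {hget : ∀ i, R'.get i = R.get (em i)} {k : Fin R.length} (hk : R.get k = 1)
    (hrange : Set.range em = {k}ᶜ) :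
    IsPendantExtension (legEmbedding (s := s) (L := L) em hget)
      (Sum.inr (Sum.inr ⟨k, ⟨0, hk ▸ Nat.one_pos⟩⟩)) (vR s L R) where
  adj_iff v := by
    rw [DoubleSpider, SimpleGraph.fromRel_adj]
    rcases v with a | (⟨i, j⟩ | ⟨i, j⟩)
    · simp [vR, Fin.ext_iff, eq_comm]
    · simp [vR]
    · simp [vR]
      rintro - rfl hj
      have : (j : ℕ) < 1 := hk ▸ j.isLt
      omega
  range_eq := by
    ext x
    rcases x with a | (⟨i, j⟩ | ⟨i, j⟩)
    · simp [legEmbedding]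
    · simp [legEmbedding]
    · simp [legEmbedding]
      constructor
      · rintro ⟨a, b, hab⟩ hik
        have : em a ≠ k := (Set.ext_iff.mp hrange _).mp ⟨a, rfl⟩
        exact (this ((congrArg Sigma.fst hab).trans hik)).elim
      · intro hj
        by_cases hik : i = k
        · subst hik
          have : (j : ℕ) < 1 := hk ▸ j.isLt
          exact absurd (heq_of_eq (Fin.ext (by simp only; omega))) (hj rfl)
        · obtain ⟨a, rfl⟩ := (Set.ext_iff.mp hrange i).mpr hik
          exact ⟨a, (finCongr (hget a)).symm j, by simp [Sigma.map]⟩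

theorem degree_inl_le_two {a : Fin (s + 1)} (ha0 : (a : ℕ) ≠ 0) (has : (a : ℕ) ≠ s) :
    (DoubleSpider s L R).degree (Sum.inl a) ≤ 2 := by
  have := a.isLt
  refine degree_le_two_of_forall_adj (Sum.inl ⟨a - 1, by omega⟩) (Sum.inl ⟨a + 1, by omega⟩)
    fun v hv => ?_
  rw [DoubleSpider, SimpleGraph.fromRel_adj] at hv
  rcases v with b | (⟨i', j'⟩ | ⟨i', j'⟩) <;> dsimp only at hv
  · simp only [Sum.inl.injEq, Fin.ext_iff]
    omega
  all_goals exact absurd hv.2 (by simp [ha0, has])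

theorem degree_inr_inl_le_two (i : Fin L.length) (j : Fin (L.get i)) :
    (DoubleSpider s L R).degree (Sum.inr (Sum.inl ⟨i, j⟩)) ≤ 2 := by
  -- `min (j + 1) (ℓ - 1)` is the successor of `j` on its leg of length `ℓ`, if there is one.
  refine degree_le_two_of_forall_adj
    (if (j : ℕ) = 0 then vL s L R else Sum.inr (Sum.inl ⟨i, ⟨j - 1, by omega⟩⟩))
    (Sum.inr (Sum.inl ⟨i, ⟨min (j + 1) (L.get i - 1), by omega⟩⟩)) fun v hv => ?_
  rw [DoubleSpider, SimpleGraph.fromRel_adj] at hv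
  rcases v with b | (⟨i', j'⟩ | ⟨i', j'⟩) <;> dsimp only at hv
  · obtain ⟨hb, hj⟩ := hv.2.resolve_left id
    left
    rw [if_pos hj, vL, Sum.inl.injEq, Fin.ext_iff]
    exact hb
  · have := j'.isLt
    obtain ⟨-, ⟨rfl, hj⟩ | ⟨rfl, hj⟩⟩ := hv
    · right
      simp only [Sum.inr.injEq, Sum.inl.injEq, Sigma.mk.inj_iff, heq_iff_eq, Fin.ext_iff,
        true_and]
      omega
    · left
      rw [if_neg (by omega)]
      simp only [Sum.inr.injEq, Sum.inl.injEq, Sigma.mk.inj_iff, heq_iff_eq, Fin.ext_iff,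
        true_and]
      omega
  · exact absurd hv.2 (by simp)

theorem degree_inr_inr_le_two (i : Fin R.length) (j : Fin (R.get i)) :
    (DoubleSpider s L R).degree (Sum.inr (Sum.inr ⟨i, j⟩)) ≤ 2 := by
  refine degree_le_two_of_forall_adj
    (if (j : ℕ) = 0 then vR s L R else Sum.inr (Sum.inr ⟨i, ⟨j - 1, by omega⟩⟩))
    (Sum.inr (Sum.inr ⟨i, ⟨min (j + 1) (R.get i - 1), by omega⟩⟩)) fun v hv => ?_
  rw [DoubleSpider, SimpleGraph.fromRel_adj] at hv
  rcases v with b | (⟨i', j'⟩ | ⟨i', j'⟩) <;> dsimp only at hv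
  · obtain ⟨hb, hj⟩ := hv.2.resolve_left id
    left
    rw [if_pos hj, vR, Sum.inl.injEq, Fin.ext_iff]
    exact hb
  · exact absurd hv.2 (by simp)
  · have := j'.isLt
    obtain ⟨-, ⟨rfl, hj⟩ | ⟨rfl, hj⟩⟩ := hv
    · right
      simp only [Sum.inr.injEq, Sigma.mk.inj_iff, heq_iff_eq, Fin.ext_iff, true_and]
      omega
    · left
      rw [if_neg (by omega)]
      simp only [Sum.inr.injEq, Sigma.mk.inj_iff, heq_iff_eq, Fin.ext_iff, true_and]
      omega

theorem degree_le_two {u : DSVert s L R} (hl : u ≠ vL s L R) (hr : u ≠ vR s L R) :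
    (DoubleSpider s L R).degree u ≤ 2 := by
  rcases u with a | (⟨i, j⟩ | ⟨i, j⟩)
  · exact degree_inl_le_two (fun h => hl (by simp [vL, Fin.ext_iff, h]))
      (fun h => hr (by simp [vR, Fin.ext_iff, h]))
  · exact degree_inr_inl_le_two i j
  · exact degree_inr_inr_le_two i j

theorem degree_pos (hs : 1 ≤ s) (u : DSVert s L R) : 0 < (DoubleSpider s L R).degree u := by
  rw [SimpleGraph.degree_pos_iff_exists_adj]
  simp only [DoubleSpider, SimpleGraph.fromRel_adj]
  rcases u with a | (⟨i, j⟩ | ⟨i, j⟩)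
  · rcases Nat.lt_or_ge a s with h | h
    · exact ⟨Sum.inl ⟨a + 1, by omega⟩, by simp [Fin.ext_iff]⟩
    · exact ⟨Sum.inl ⟨a - 1, by omega⟩, by simp [Fin.ext_iff]; omega⟩
  · refine ⟨if (j : ℕ) = 0 then vL s L R else Sum.inr (Sum.inl ⟨i, ⟨j - 1, by omega⟩⟩),
      ?_⟩
    split_ifs with hj
    · simp [vL, hj]
    · simp [Fin.ext_iff]
      omega
  · refine ⟨if (j : ℕ) = 0 then vR s L R else Sum.inr (Sum.inr ⟨i, ⟨j - 1, by omega⟩⟩),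
      ?_⟩
    split_ifs with hj
    · simp [vR, hj]
    · simp [Fin.ext_iff]
      omega

end DoubleSpider

theorem stronglyAntimagic_of_erase_right_one_general (s : ℕ) (hs : 1 ≤ s) (L R : List ℕ)
    (hP : 1 ∈ R)
    (hlr : (DoubleSpider s L R).degree (vR s L R) ≤ (DoubleSpider s L R).degree (vL s L R))
    (hr : 3 < (DoubleSpider s L R).degree (vR s L R))
    (h : IsStronglyAntimagic (DoubleSpider s L (R.erase 1))) :
    IsStronglyAntimagic (DoubleSpider s L R) := by
  obtain ⟨k, em, hk, hrange, hget⟩ := List.exists_embedding_erase hP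
  obtain ⟨f, hf⟩ := h
  refine ⟨_, (DoubleSpider.isPendantExtension_legEmbedding (s := s) (L := L) (hget := hget) hk
    hrange).isStronglyAntimagicLabeling_pendantLabeling hf (DoubleSpider.degree_pos hs)
    fun a ha => ?_⟩
  by_cases hl : DoubleSpider.legEmbedding em hget a = vL s L R
  · rw [hl]
    omega
  · have := DoubleSpider.degree_le_two hl ha
    omega

/-- Let `G = DS(L, Pᶜᵒʳᵉ, R)` be a double spider containing a leg `P` of
length one with `P ∈ R`.  If `deg_G(v_l) ≥ deg_G(v_r) > 3` and the double spider
`DS(L, Pᶜᵒʳᵉ, R \ {P})` obtained from `G` by deleting the leg `P` is strongly antimagic,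
then `G` is strongly antimagic. -/
theorem stronglyAntimagic_of_erase_right_one (s : ℕ) (hs : 1 ≤ s) (L R : List ℕ)
    (hL : ∀ ℓ ∈ L, 1 ≤ ℓ) (hR : ∀ ℓ ∈ R, 1 ≤ ℓ)
    (hP : 1 ∈ R)
    (hlr : (DoubleSpider s L R).degree (vR s L R) ≤ (DoubleSpider s L R).degree (vL s L R))
    (hr : 3 < (DoubleSpider s L R).degree (vR s L R))
    (h : IsStronglyAntimagic (DoubleSpider s L (R.erase 1))) :
    IsStronglyAntimagic (DoubleSpider s L R) :=
  stronglyAntimagic_of_erase_right_one_general s hs L R hP hlr hr h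
end
end

section
/- Let G be a strongly antimagic finite simple connected graph and let k be a positive integer. Let V_k = {v ∈ V(G) : deg(v) = k}, and form a new graph G' from G by attaching one new pendant edge (with a new endpoint) to each vertex of V_k. Then G' is strongly antimagic. -/
open Classical

noncomputable section

/-- The graph obtained from `G` by attaching one new pendant edge (with a new endpoint)
to each vertex of degree exactly `k`. -/
def attachAtDegree {V : Type*} [Fintype V] (G : SimpleGraph V) (k : ℕ) :
    SimpleGraph (V ⊕ {v : V // G.degree v = k}) :=
  SimpleGraph.fromRel fun x y =>
    (∃ a b : V, x = Sum.inl a ∧ y = Sum.inl b ∧ G.Adj a b) ∨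
    (∃ a : {v : V // G.degree v = k}, x = Sum.inl a.1 ∧ y = Sum.inr a)

/-!
Label the `t = |V_k|` pendant edges by `1, …, t` in the order of the vertex sums of their
attachment vertices, and shift every old label up by `t`. An old vertex `v` then has vertex sum
`φ(v) + t·deg v + ε(v)`, where `0 ≤ ε(v) ≤ t`, `ε` vanishes off `V_k` and increases with `φ` on
`V_k`; since one unit of degree is worth `t`, the new sums of old vertices are ordered exactly as
the old ones, while the new degree of an old vertex is a nondecreasing function of its old
degree. A pendant vertex has sum in `[1, t]`, whereas an old vertex has sum `0` (if isolated,
which `k ≠ 0` keeps out of `V_k`) or more than `t`.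
-/

section Rank

variable {α β : Type*} [Fintype α] [LinearOrder β]

def rankBy (s : α → β) (a : α) : ℕ :=
  (Finset.univ.filter fun b => s b < s a).card + 1

variable (s : α → β)

lemma one_le_rankBy (a : α) : 1 ≤ rankBy s a :=
  Nat.le_add_left 1 _

lemma rankBy_le_card (a : α) : rankBy s a ≤ Fintype.card α := by
  have h : (Finset.univ.filter fun b => s b < s a) ⊂ Finset.univ :=
    Finset.filter_ssubset.mpr ⟨a, Finset.mem_univ a, lt_irrefl _⟩
  exact Finset.card_lt_card h

lemma rankBy_lt_rankBy {a b : α} (hab : s a < s b) : rankBy s a < rankBy s b := by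
  have h : (Finset.univ.filter fun c => s c < s a) ⊂ Finset.univ.filter fun c => s c < s b :=
    (Finset.ssubset_iff_of_subset (Finset.monotone_filter_right _ fun _ _ hc => hc.trans hab)).mpr
      ⟨a, by simpa using hab, by simp⟩
  exact Nat.add_lt_add_right (Finset.card_lt_card h) 1

lemma rankBy_injective (hs : Function.Injective s) : Function.Injective (rankBy s) := by
  intro a b hab
  rcases lt_trichotomy (s a) (s b) with h | h | h
  · exact absurd hab (rankBy_lt_rankBy s h).ne
  · exact hs h
  · exact absurd hab (rankBy_lt_rankBy s h).ne'

end Rank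

section VertexSum

variable {V : Type*} [Fintype V] (G : SimpleGraph V) (f : Sym2 V → ℕ)

lemma vertexSum_eq_sum_neighborFinset (u : V) :
    vertexSum G f u = ∑ w ∈ G.neighborFinset u, f s(u, w) := by
  refine (Finset.sum_bij (fun w _ => s(u, w)) ?_ ?_ ?_ fun _ _ => rfl).symm
  · intro w hw
    simpa [SimpleGraph.mem_incidenceFinset, SimpleGraph.incidenceSet] using hw
  · intro a _ b _ h
    exact Sym2.congr_right.mp h
  · intro e he
    rw [SimpleGraph.mem_incidenceFinset] at he
    obtain ⟨w, rfl⟩ := (Sym2.mem_iff_exists.mp he.2)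
    exact ⟨w, by simpa using he.1, rfl⟩

lemma vertexSum_pos (hf : ∀ e ∈ G.edgeSet, 0 < f e) {u : V} (hu : 0 < G.degree u) :
    0 < vertexSum G f u := by
  rw [← SimpleGraph.card_incidenceFinset_eq_degree, Finset.card_pos] at hu
  refine Finset.sum_pos (fun e he => hf e ?_) hu
  exact G.incidenceSet_subset u ((G.mem_incidenceFinset u e).mp he)

end VertexSum

section AttachAtDegree

variable {V : Type*} [Fintype V] (G : SimpleGraph V) (k : ℕ)

@[simp]
lemma attachAtDegree_adj_inl_inl {v w : V} :
    (attachAtDegree G k).Adj (.inl v) (.inl w) ↔ G.Adj v w := by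
  simp only [attachAtDegree, SimpleGraph.fromRel_adj]
  grind [SimpleGraph.Adj.ne, SimpleGraph.adj_symm]

@[simp]
lemma attachAtDegree_adj_inl_inr {v : V} {a : {v : V // G.degree v = k}} :
    (attachAtDegree G k).Adj (.inl v) (.inr a) ↔ v = a.1 := by
  simp only [attachAtDegree, SimpleGraph.fromRel_adj]
  grind

@[simp]
lemma attachAtDegree_adj_inr_inl {v : V} {a : {v : V // G.degree v = k}} :
    (attachAtDegree G k).Adj (.inr a) (.inl v) ↔ v = a.1 := by
  rw [SimpleGraph.adj_comm, attachAtDegree_adj_inl_inr]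

@[simp]
lemma attachAtDegree_not_adj_inr_inr {a b : {v : V // G.degree v = k}} :
    ¬ (attachAtDegree G k).Adj (.inr a) (.inr b) := by
  simp [attachAtDegree]

lemma attachAtDegree_neighborFinset_inl (v : V) :
    (attachAtDegree G k).neighborFinset (.inl v) =
      (G.neighborFinset v).disjSum (if h : G.degree v = k then {⟨v, h⟩} else ∅) := by
  ext (w | a)
  · simp
  · split_ifs with h
    · simp [Subtype.ext_iff, eq_comm]
    · simpa using fun hv : v = a.1 => h (hv ▸ a.2)

lemma attachAtDegree_neighborFinset_inr (a : {v : V // G.degree v = k}) :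
    (attachAtDegree G k).neighborFinset (.inr a) = {.inl a.1} := by
  ext (w | b) <;> simp

lemma attachAtDegree_degree_inl (v : V) :
    (attachAtDegree G k).degree (.inl v) = G.degree v + if G.degree v = k then 1 else 0 := by
  rw [← SimpleGraph.card_neighborFinset_eq_degree, attachAtDegree_neighborFinset_inl,
    Finset.card_disjSum, SimpleGraph.card_neighborFinset_eq_degree]
  split_ifs <;> rfl

lemma attachAtDegree_degree_inr (a : {v : V // G.degree v = k}) :
    (attachAtDegree G k).degree (.inr a) = 1 := by
  rw [← SimpleGraph.card_neighborFinset_eq_degree, attachAtDegree_neighborFinset_inr,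
    Finset.card_singleton]

lemma card_edgeFinset_attachAtDegree :
    (attachAtDegree G k).edgeFinset.card =
      G.edgeFinset.card + Fintype.card {v : V // G.degree v = k} := by
  have := (attachAtDegree G k).sum_degrees_eq_twice_card_edges
  rw [Fintype.sum_sum_type] at this
  simp only [attachAtDegree_degree_inl, attachAtDegree_degree_inr, Finset.sum_add_distrib,
    G.sum_degrees_eq_twice_card_edges, Finset.sum_boole, Nat.cast_id, Finset.sum_const,
    smul_eq_mul, mul_one, Finset.card_univ, ← Fintype.card_subtype] at this
  omega

lemma attachAtDegree_edgeSet :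
    (attachAtDegree G k).edgeSet =
      Sym2.map Sum.inl '' G.edgeSet ∪ Set.range fun a => s(.inl a.1, .inr a) := by
  refine subset_antisymm (fun e he => ?_) (Set.union_subset ?_ ?_)
  · induction e using Sym2.ind with
    | _ x y =>
    rcases x with v | a <;> rcases y with w | b <;> simp only [SimpleGraph.mem_edgeSet,
      attachAtDegree_adj_inl_inl, attachAtDegree_adj_inl_inr, attachAtDegree_adj_inr_inl,
      attachAtDegree_not_adj_inr_inr] at he
    · exact Or.inl ⟨s(v, w), he, rfl⟩
    · exact Or.inr ⟨b, by rw [he]⟩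
    · exact Or.inr ⟨a, by rw [he, Sym2.eq_swap]⟩
  · rintro _ ⟨e, he, rfl⟩
    induction e using Sym2.ind with
    | _ v w => simpa using he
  · rintro _ ⟨a, rfl⟩
    simp

end AttachAtDegree

section Labeling

variable {V W : Type*} (f : Sym2 V → ℕ) (ℓ : W → ℕ) (t : ℕ)

def attachLabeling : Sym2 (V ⊕ W) → ℕ :=
  Sym2.lift ⟨fun
    | .inl a, .inl b => f s(a, b) + t
    | .inl _, .inr c | .inr c, .inl _ => ℓ c
    | .inr _, .inr _ => 0, by rintro (a | a) (b | b) <;> simp [Sym2.eq_swap]⟩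

@[simp]
lemma attachLabeling_inl_inl (a b : V) :
    attachLabeling f ℓ t s(.inl a, .inl b) = f s(a, b) + t := rfl

@[simp]
lemma attachLabeling_inl_inr (a : V) (c : W) : attachLabeling f ℓ t s(.inl a, .inr c) = ℓ c :=
  rfl

lemma attachLabeling_map_inl (e : Sym2 V) :
    attachLabeling f ℓ t (Sym2.map Sum.inl e) = f e + t := by
  induction e using Sym2.ind with
  | _ a b => rfl

end Labeling

section AttachLabeling

variable {V : Type*} [Fintype V] {G : SimpleGraph V} {k : ℕ} {f : Sym2 V → ℕ}
  {ℓ : {v : V // G.degree v = k} → ℕ} {t : ℕ}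

lemma vertexSum_attachLabeling_inl (v : V) :
    vertexSum (attachAtDegree G k) (attachLabeling f ℓ t) (.inl v) =
      vertexSum G f v + t * G.degree v + if h : G.degree v = k then ℓ ⟨v, h⟩ else 0 := by
  rw [vertexSum_eq_sum_neighborFinset, attachAtDegree_neighborFinset_inl, Finset.sum_disjSum,
    vertexSum_eq_sum_neighborFinset]
  simp only [attachLabeling_inl_inl, attachLabeling_inl_inr, Finset.sum_add_distrib,
    Finset.sum_const, SimpleGraph.card_neighborFinset_eq_degree, smul_eq_mul, mul_comm]
  congr 1
  split_ifs <;> simp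

lemma vertexSum_attachLabeling_inr (a : {v : V // G.degree v = k}) :
    vertexSum (attachAtDegree G k) (attachLabeling f ℓ t) (.inr a) = ℓ a := by
  rw [vertexSum_eq_sum_neighborFinset, attachAtDegree_neighborFinset_inr, Finset.sum_singleton,
    Sym2.eq_swap, attachLabeling_inl_inr]


lemma bijOn_attachLabeling (hf : Set.BijOn f G.edgeSet (Set.Icc 1 G.edgeFinset.card))
    (hℓ : Function.Injective ℓ)
    (hℓt : ∀ a, ℓ a ∈ Set.Icc 1 (Fintype.card {v : V // G.degree v = k})) :
    Set.BijOn (attachLabeling f ℓ (Fintype.card {v : V // G.degree v = k}))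
      (attachAtDegree G k).edgeSet (Set.Icc 1 (attachAtDegree G k).edgeFinset.card) := by
  have hmaps : Set.MapsTo (attachLabeling f ℓ (Fintype.card {v : V // G.degree v = k}))
      (attachAtDegree G k).edgeSet (Set.Icc 1 (attachAtDegree G k).edgeFinset.card) := by
    rw [attachAtDegree_edgeSet, card_edgeFinset_attachAtDegree]
    rintro _ (⟨e, he, rfl⟩ | ⟨a, rfl⟩)
    · have := hf.mapsTo he
      simp only [Set.mem_Icc, attachLabeling_map_inl] at this ⊢
      omega
    · have := hℓt a
      simp only [Set.mem_Icc, attachLabeling_inl_inr] at this ⊢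
      omega
  have hinj : Set.InjOn (attachLabeling f ℓ (Fintype.card {v : V // G.degree v = k}))
      (attachAtDegree G k).edgeSet := by
    rw [attachAtDegree_edgeSet]
    rintro _ (⟨e₁, he₁, rfl⟩ | ⟨a, rfl⟩) _ (⟨e₂, he₂, rfl⟩ | ⟨b, rfl⟩) h <;>
      simp only [attachLabeling_map_inl, attachLabeling_inl_inr] at h
    · rw [hf.injOn he₁ he₂ (by omega)]
    · have := (hf.mapsTo he₁).1; have := (hℓt b).2; omega
    · have := (hf.mapsTo he₂).1; have := (hℓt a).2; omega
    · rw [hℓ h]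
  refine ⟨hmaps, hinj, ?_⟩
  rw [← SimpleGraph.coe_edgeFinset, ← Finset.coe_Icc]
  exact Finset.surjOn_of_injOn_of_card_le _ (by simpa using hmaps) (by simpa using hinj) (by simp)

end AttachLabeling

section StronglyAntimagic

variable {V : Type*} [Fintype V] {G : SimpleGraph V} {k : ℕ} {f : Sym2 V → ℕ}

variable (G k f) in
def attachAtDegreeLabeling : Sym2 (V ⊕ {v : V // G.degree v = k}) → ℕ :=
  attachLabeling f (rankBy fun a : {v : V // G.degree v = k} => vertexSum G f a.1)
    (Fintype.card {v : V // G.degree v = k})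

local notation "ψ" => vertexSum (attachAtDegree G k) (attachAtDegreeLabeling G k f)

variable (f) in
lemma vertexSum_attachAtDegreeLabeling_inr_mem_Icc (a : {v : V // G.degree v = k}) :
    ψ (.inr a) ∈ Set.Icc 1 (Fintype.card {v : V // G.degree v = k}) := by
  rw [attachAtDegreeLabeling, vertexSum_attachLabeling_inr]
  exact ⟨one_le_rankBy _ a, rankBy_le_card _ a⟩

lemma vertexSum_attachAtDegreeLabeling_inl_lt_inl
    (hmono : ∀ u v, G.degree u < G.degree v → vertexSum G f u < vertexSum G f v) {u v : V}
    (huv : vertexSum G f u < vertexSum G f v) : ψ (.inl u) < ψ (.inl v) := by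
  rw [attachAtDegreeLabeling, vertexSum_attachLabeling_inl, vertexSum_attachLabeling_inl]
  set t := Fintype.card {v : V // G.degree v = k}
  have hpend (w : V) : (if h : G.degree w = k then
      rankBy (fun a : {v : V // G.degree v = k} => vertexSum G f a.1) ⟨w, h⟩ else 0) ≤ t := by
    split_ifs
    exacts [rankBy_le_card _ _, Nat.zero_le _]
  rcases (not_lt.mp fun h => (hmono v u h).not_gt huv).lt_or_eq with hdeg | hdeg
  · have : t * G.degree u + t ≤ t * G.degree v := Nat.mul_succ t _ ▸ Nat.mul_le_mul_left t hdeg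
    have := hpend u
    omega
  · have : t * G.degree u = t * G.degree v := by rw [hdeg]
    by_cases hu : G.degree u = k
    · have hv : G.degree v = k := hdeg ▸ hu
      have := rankBy_lt_rankBy (fun a : {v : V // G.degree v = k} => vertexSum G f a.1)
        (a := ⟨u, hu⟩) (b := ⟨v, hv⟩) huv
      rw [dif_pos hu, dif_pos hv]
      omega
    · rw [dif_neg hu, dif_neg (hdeg ▸ hu)]
      omega

lemma vertexSum_attachAtDegreeLabeling_inl_of_degree_eq_zero (hk : k ≠ 0) {v : V}
    (hv : G.degree v = 0) : ψ (.inl v) = 0 := by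
  have hinc : G.incidenceFinset v = ∅ :=
    Finset.card_eq_zero.mp ((G.card_incidenceFinset_eq_degree v).trans hv)
  rw [attachAtDegreeLabeling, vertexSum_attachLabeling_inl, dif_neg (hv ▸ hk.symm), hv,
    vertexSum, hinc, Finset.sum_empty, mul_zero, add_zero, add_zero]

lemma card_lt_vertexSum_attachAtDegreeLabeling_inl (hf : ∀ e ∈ G.edgeSet, 0 < f e) {v : V}
    (hv : 0 < G.degree v) : Fintype.card {v : V // G.degree v = k} < ψ (.inl v) := by
  rw [attachAtDegreeLabeling, vertexSum_attachLabeling_inl]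
  have := vertexSum_pos G f hf hv
  have := Nat.le_mul_of_pos_right (Fintype.card {v : V // G.degree v = k}) hv
  omega

lemma vertexSum_attachAtDegreeLabeling_lt_of_degree_lt (hk : k ≠ 0)
    (hf : ∀ e ∈ G.edgeSet, 0 < f e)
    (hmono : ∀ u v, G.degree u < G.degree v → vertexSum G f u < vertexSum G f v)
    {x y : V ⊕ {v : V // G.degree v = k}}
    (hxy : (attachAtDegree G k).degree x < (attachAtDegree G k).degree y) : ψ x < ψ y := by
  rcases x with u | a <;> rcases y with v | b <;>
    simp only [attachAtDegree_degree_inl, attachAtDegree_degree_inr] at hxy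
  · refine vertexSum_attachAtDegreeLabeling_inl_lt_inl hmono (hmono u v ?_)
    split_ifs at hxy <;> omega
  · rw [vertexSum_attachAtDegreeLabeling_inl_of_degree_eq_zero hk (by split_ifs at hxy <;> omega)]
    exact (vertexSum_attachAtDegreeLabeling_inr_mem_Icc f b).1
  · exact (vertexSum_attachAtDegreeLabeling_inr_mem_Icc f a).2.trans_lt
      (card_lt_vertexSum_attachAtDegreeLabeling_inl hf (by split_ifs at hxy <;> omega))
  · exact absurd hxy (lt_irrefl 1)

lemma injective_vertexSum_attachAtDegreeLabeling (hk : k ≠ 0)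
    (hf : ∀ e ∈ G.edgeSet, 0 < f e) (hinj : Function.Injective (vertexSum G f))
    (hmono : ∀ u v, G.degree u < G.degree v → vertexSum G f u < vertexSum G f v) :
    Function.Injective ψ := by
  have hgap (v : V) : ψ (.inl v) = 0 ∨ Fintype.card {v : V // G.degree v = k} < ψ (.inl v) :=
    (G.degree v).eq_zero_or_pos.imp
      (vertexSum_attachAtDegreeLabeling_inl_of_degree_eq_zero hk)
      (card_lt_vertexSum_attachAtDegreeLabeling_inl hf)
  rintro (u | a) (v | b) h
  · congr 1
    refine hinj (by_contra fun hne => ?_)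
    rcases Ne.lt_or_gt hne with huv | hvu
    · exact (vertexSum_attachAtDegreeLabeling_inl_lt_inl hmono huv).ne h
    · exact (vertexSum_attachAtDegreeLabeling_inl_lt_inl hmono hvu).ne' h
  · have := vertexSum_attachAtDegreeLabeling_inr_mem_Icc f b
    rcases hgap u with hu | hu <;> simp only [Set.mem_Icc] at this <;> omega
  · have := vertexSum_attachAtDegreeLabeling_inr_mem_Icc f a
    rcases hgap v with hv | hv <;> simp only [Set.mem_Icc] at this <;> omega
  · rw [attachAtDegreeLabeling, vertexSum_attachLabeling_inr, vertexSum_attachLabeling_inr] at h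
    rw [rankBy_injective _ (hinj.comp Subtype.val_injective) h]

end StronglyAntimagic

theorem attachAtDegree_isStronglyAntimagic_general {V : Type*} [Fintype V] (G : SimpleGraph V)
    (k : ℕ) (hk : 0 < k) (h : IsStronglyAntimagic G) :
    IsStronglyAntimagic (attachAtDegree G k) := by
  obtain ⟨f, hbij, hinj, hmono⟩ := h
  have hpos : ∀ e ∈ G.edgeSet, 0 < f e := fun e he => (hbij.mapsTo he).1
  refine ⟨attachAtDegreeLabeling G k f, ?_, ?_, ?_⟩
  · exact bijOn_attachLabeling hbij (rankBy_injective _ (hinj.comp Subtype.val_injective))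
      fun a => ⟨one_le_rankBy _ a, rankBy_le_card _ a⟩
  · exact injective_vertexSum_attachAtDegreeLabeling hk.ne' hpos hinj hmono
  · exact fun x y => vertexSum_attachAtDegreeLabeling_lt_of_degree_lt hk.ne' hpos hmono

/-- Let `G` be a strongly antimagic finite simple connected graph and
`k` a positive integer. Then the graph obtained from `G` by attaching one new pendant
edge to each vertex of degree exactly `k` is strongly antimagic. -/
theorem attachAtDegree_isStronglyAntimagic {V : Type*} [Fintype V] (G : SimpleGraph V)
    (k : ℕ) (hk : 0 < k) (hconn : G.Connected) (h : IsStronglyAntimagic G) :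
    IsStronglyAntimagic (attachAtDegree G k) :=
  attachAtDegree_isStronglyAntimagic_general G k hk h
end
end
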